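/- Let n ≥ 1, let 𝒴 = {1, ..., K} with K ≥ 1, and let (X_i, Y_i), i = 1, ..., 2n+1, be random variables with values in 𝒳 × 𝒴 whose joint distribution is exchangeable. Fix a measurable score function s : 𝒳 × 𝒴 → ℝ. For y ∈ 𝒴 let I_y = {i ∈ {n+1,...,2n} : Y_i = y}, n_y = |I_y|, and define p(X_{2n+1}|y) = (Σ_{i ∈ I_y} 1{s(X_i, y) ≤ s(X_{2n+1}, y)} + 1)/(n_y + 1). Fix α ∈ (0,1) and define C(X_{2n+1}) = {y ∈ 𝒴 : p(X_{2n+1}|y) > α}. Fix y ∈ 𝒴 and a subset I ⊆ {n+1,...,2n} with |I| = m such that P(I_y = I, Y_{2n+1} = y) > 0, and suppose that on this event the scores {s(X_i, y) : i ∈ I} ∪ {s(X_{2n+1}, y)} are almost surely pairwise distinct. Then P(Y_{2n+1} ∈ C(X_{2n+1}) | I_y = I, Y_{2n+1} = y) ≤ 1 − α + 1/(m+1). -/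

import Mathlib

/-!
On the event `E = {I_y = I, Y_{2n+1} = y}` the conformal p-value equals `R / (m + 1)`, where `R`
is the rank of the test score among the `m + 1` scores indexed by `J = I ∪ {2n+1}`. The event `E`
is invariant under transpositions inside `J`, so by exchangeability every index of `J` is as
likely as the test point to have rank above `⌊α (m + 1)⌋` jointly with `E`. On `E` the ranks are
a.s. distinct, so at most `m + 1 - ⌊α (m + 1)⌋` indices do; averaging over `J` gives
`(m + 1) P(E, α < p) ≤ (m + 1 - ⌊α (m + 1)⌋) P(E)`.
-/

open MeasureTheory ProbabilityTheory Finset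
open scoped ENNReal

namespace Conformal

section Rank

variable {ι α : Type*} [LinearOrder α] {f : ι → α} {J : Finset ι}

def rank (f : ι → α) (J : Finset ι) (j : ι) : ℕ := #{i ∈ J | f i ≤ f j}

lemma rank_le_card (f : ι → α) (J : Finset ι) (j : ι) : rank f J j ≤ #J :=
  card_filter_le _ _

lemma rank_lt_rank {j₁ j₂ : ι} (hj₂ : j₂ ∈ J) (h : f j₁ < f j₂) : rank f J j₁ < rank f J j₂ :=
  card_lt_card <| (ssubset_iff_of_subset (monotone_filter_right _ fun _ _ hi => hi.trans h.le)).2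
    ⟨j₂, by simp [hj₂], by simp [h]⟩

lemma injOn_rank (hf : Set.InjOn f J) : Set.InjOn (rank f J) J := by
  intro j₁ h₁ j₂ h₂ h
  refine hf h₁ h₂ (le_antisymm ?_ ?_) <;> by_contra! hlt
  · exact (rank_lt_rank h₁ hlt).ne' h
  · exact (rank_lt_rank h₂ hlt).ne h

lemma card_filter_lt_rank_le (hf : Set.InjOn f J) (r : ℕ) :
    #{j ∈ J | r < rank f J j} ≤ #J - r := by
  simpa using card_le_card_of_injOn (rank f J) (t := Ioc r #J)
    (fun j hj => by simp_all [rank_le_card])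
    ((injOn_rank hf).mono (coe_subset.2 (filter_subset _ _)))

lemma rank_insert_self [DecidableEq ι] {I : Finset ι} {j : ι} (hj : j ∉ I) :
    rank f (insert j I) j = #{i ∈ I | f i ≤ f j} + 1 := by
  rw [rank, filter_insert, if_pos le_rfl, card_insert_of_notMem (by simp [hj])]

lemma rank_comp_perm (σ : Equiv.Perm ι) (hσ : ∀ i, σ i ∈ J ↔ i ∈ J) (j : ι) :
    rank (f ∘ σ) J j = rank f J (σ j) :=
  card_equiv σ fun i => by simp [hσ]

lemma measurable_rank {γ : Type*} [MeasurableSpace γ] {f : γ → ι → ℝ}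
    (hf : ∀ i, Measurable fun c => f c i) (J : Finset ι) (j : ι) :
    Measurable fun c => rank (f c) J j := by
  simp_rw [rank, card_filter]
  exact Finset.measurable_sum _ fun i _ =>
    Measurable.ite (measurableSet_le (hf i) (hf j)) measurable_const measurable_const

end Rank

section LabelPattern

variable {ι β : Type*}

def labelPattern (D J : Finset ι) (q : β → Prop) : Set (ι → β) :=
  {z | ∀ i ∈ D, (q (z i) ↔ i ∈ J)}

lemma swap_apply_mem_iff [DecidableEq ι] {s : Finset ι} {a b : ι} (ha : a ∈ s) (hb : b ∈ s)
    (i : ι) : Equiv.swap a b i ∈ s ↔ i ∈ s := by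
  rw [Equiv.swap_apply_def]
  split_ifs <;> simp_all

lemma filter_eq_and_iff_mem_labelPattern [DecidableEq ι] {D I : Finset ι} {l : ι} (hI : I ⊆ D)
    (hl : l ∉ D) {q : β → Prop} [DecidablePred q] (z : ι → β) :
    (D.filter (fun i => q (z i)) = I ∧ q (z l)) ↔ z ∈ labelPattern (insert l D) (insert l I) q := by
  simp only [labelPattern, Set.mem_ofPred_eq]
  grind

lemma comp_perm_mem_labelPattern_iff {D J : Finset ι} {q : β → Prop} {σ : Equiv.Perm ι}
    (hD : ∀ i, σ i ∈ D ↔ i ∈ D) (hJ : ∀ i, σ i ∈ J ↔ i ∈ J) (z : ι → β) :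
    z ∘ σ ∈ labelPattern D J q ↔ z ∈ labelPattern D J q := by
  constructor
  · intro h i hi
    simpa [← hJ (σ.symm i)] using h (σ.symm i) (by rwa [← hD, Equiv.apply_symm_apply])
  · intro h i hi
    simpa [hJ] using h (σ i) ((hD i).2 hi)

lemma measurableSet_labelPattern [Countable ι] [MeasurableSpace β] {q : β → Prop}
    (hq : Measurable q) (D J : Finset ι) : MeasurableSet (labelPattern D J q) :=
  measurableSet_setOfPred.2 <| Measurable.forall fun i =>
    measurable_const.imp ((hq.comp (measurable_pi_apply i)).iff measurable_const)

end LabelPattern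

section Probability

variable {Ω ι β : Type*} [MeasurableSpace Ω] [MeasurableSpace β]

lemma sum_measure_le_of_card_le (μ : Measure Ω) {J : Finset ι} {A : ι → Set Ω}
    [∀ j, DecidablePred (· ∈ A j)]
    (hA : ∀ j ∈ J, MeasurableSet (A j)) {E : Set Ω} (hE : MeasurableSet E)
    (hAE : ∀ j ∈ J, A j ⊆ E) {c : ℕ} (hc : ∀ᵐ ω ∂μ, ω ∈ E → #{j ∈ J | ω ∈ A j} ≤ c) :
    ∑ j ∈ J, μ (A j) ≤ c * μ E := by
  have hpoint : ∀ᵐ ω ∂μ,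
      ∑ j ∈ J, (A j).indicator 1 ω ≤ E.indicator (fun _ => (c : ℝ≥0∞)) ω := by
    filter_upwards [hc] with ω hω
    by_cases hωE : ω ∈ E
    · rw [Set.indicator_of_mem hωE]
      simp only [Set.indicator_apply, Pi.one_apply]
      rw [sum_boole]
      exact_mod_cast hω hωE
    · rw [Set.indicator_of_notMem hωE, sum_eq_zero fun j hj =>
        Set.indicator_of_notMem (fun h => hωE (hAE j hj h)) _]
  calc ∑ j ∈ J, μ (A j) = ∫⁻ ω, ∑ j ∈ J, (A j).indicator 1 ω ∂μ := by
        rw [lintegral_finsetSum' _ fun j hj => (measurable_one.indicator (hA j hj)).aemeasurable]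
        exact sum_congr rfl fun j hj => (lintegral_indicator_one (hA j hj)).symm
    _ ≤ ∫⁻ ω, E.indicator (fun _ => (c : ℝ≥0∞)) ω ∂μ := lintegral_mono_ae hpoint
    _ = c * μ E := lintegral_indicator_const hE _

lemma cond_apply_le_div_of_mul_le {μ : Measure Ω} {E A : Set Ω} (hE : MeasurableSet E)
    {a b : ℝ≥0∞} (ha₀ : a ≠ 0) (ha : a ≠ ∞) (h : a * μ (E ∩ A) ≤ b * μ E) :
    μ[|E] A ≤ b / a := by
  rw [cond_apply hE, mul_comm, ← div_eq_mul_inv]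
  refine ENNReal.div_le_of_le_mul ?_
  rw [← ENNReal.mul_div_right_comm]
  exact (ENNReal.le_div_iff_mul_le (.inl ha₀) (.inl ha)).2 (by rwa [mul_comm])

variable {P : Measure Ω} {Z : ι → Ω → β}

lemma measure_comp_perm_mem_eq (hmeas : ∀ i, Measurable (Z i))
    (hexch : ∀ σ : Equiv.Perm ι,
      Measure.map (fun ω i => Z (σ i) ω) P = Measure.map (fun ω i => Z i ω) P)
    (σ : Equiv.Perm ι) {S : Set (ι → β)} (hS : MeasurableSet S) :
    P {ω | (fun i => Z (σ i) ω) ∈ S} = P {ω | (fun i => Z i ω) ∈ S} := by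
  have hZ : Measurable fun ω i => Z i ω := measurable_pi_lambda _ hmeas
  have hZσ : Measurable fun ω i => Z (σ i) ω := measurable_pi_lambda _ fun i => hmeas (σ i)
  exact (Measure.map_apply hZσ hS).symm.trans (by rw [hexch, Measure.map_apply hZ hS]; rfl)

theorem card_mul_measure_lt_rank_le [DecidableEq ι] (hmeas : ∀ i, Measurable (Z i))
    (hexch : ∀ σ : Equiv.Perm ι,
      Measure.map (fun ω i => Z (σ i) ω) P = Measure.map (fun ω i => Z i ω) P)
    {g : β → ℝ} (hg : Measurable g) {S : Set (ι → β)} (hS : MeasurableSet S)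
    {J : Finset ι} {l : ι} (hl : l ∈ J)
    (hSJ : ∀ j ∈ J, ∀ z : ι → β, z ∘ Equiv.swap j l ∈ S ↔ z ∈ S)
    (hinj : ∀ᵐ ω ∂P, (fun i => Z i ω) ∈ S → Set.InjOn (fun i => g (Z i ω)) J) (r : ℕ) :
    #J * P {ω | (fun i => Z i ω) ∈ S ∧ r < rank (fun i => g (Z i ω)) J l}
      ≤ (#J - r : ℕ) * P {ω | (fun i => Z i ω) ∈ S} := by
  classical
  set A : ι → Set Ω := fun j => {ω | (fun i => Z i ω) ∈ S ∧ r < rank (fun i => g (Z i ω)) J j}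
  have hT : ∀ j, MeasurableSet {z : ι → β | z ∈ S ∧ r < rank (g ∘ z) J j} := fun j =>
    hS.inter (measurable_rank (fun i => hg.comp (measurable_pi_apply i)) J j measurableSet_Ioi)
  have hZ : Measurable fun ω i => Z i ω := measurable_pi_lambda _ hmeas
  have hswap : ∀ j ∈ J, P (A j) = P (A l) := by
    intro j hj
    refine Eq.trans ?_ (measure_comp_perm_mem_eq hmeas hexch (Equiv.swap j l) (hT l))
    congr 1
    ext ω
    change _ ↔ (fun i => Z i ω) ∘ Equiv.swap j l ∈ S ∧ r < rank (g ∘ (fun i => Z i ω) ∘ _) J l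
    rw [hSJ j hj, ← Function.comp_assoc, rank_comp_perm _ (swap_apply_mem_iff hj hl),
      Equiv.swap_apply_right]
    rfl
  have hsum : ∑ j ∈ J, P (A j) ≤ (#J - r : ℕ) * P {ω | (fun i => Z i ω) ∈ S} := by
    refine sum_measure_le_of_card_le (A := A) (E := {ω | (fun i => Z i ω) ∈ S}) P
      (fun j _ => hZ (hT j)) (hZ hS) (fun j _ ω h => h.1) ?_
    filter_upwards [hinj] with ω hω hωS
    exact (card_le_card (monotone_filter_right J fun j _ h => h.2)).trans
      (card_filter_lt_rank_le (hω hωS) r)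
  rwa [sum_congr rfl hswap, sum_const, nsmul_eq_mul] at hsum

end Probability

lemma lt_div_iff_floor_mul_lt {a : ℝ} (ha : 0 ≤ a) {N : ℕ} (hN : 0 < N) (k : ℕ) :
    a < k / N ↔ ⌊a * N⌋₊ < k := by
  rw [lt_div_iff₀ (by positivity), Nat.floor_lt (by positivity)]

lemma natCast_sub_floor_mul_div_le {a : ℝ} (ha : a ≤ 1) {N : ℕ} (hN : 0 < N) :
    ((N - ⌊a * N⌋₊ : ℕ) : ℝ≥0∞) / N ≤ ENNReal.ofReal (1 - a + 1 / N) := by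
  have hfloor : ⌊a * N⌋₊ ≤ N := Nat.floor_le_of_le (mul_le_of_le_one_left (by positivity) ha)
  have hN' : (0 : ℝ) < N := by exact_mod_cast hN
  rw [← ENNReal.ofReal_natCast, ← ENNReal.ofReal_natCast N, ← ENNReal.ofReal_div_of_pos hN']
  refine ENNReal.ofReal_le_ofReal ?_
  rw [Nat.cast_sub hfloor, div_le_iff₀ hN']
  have hexpand : (1 - a + 1 / N) * N = N - a * N + 1 := by field_simp
  linarith [Nat.lt_floor_add_one (a * N)]

end Conformal

open Conformal

theorem conditional_prediction_set_coverage_upper_bound_general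
    {Ω : Type*} [MeasurableSpace Ω] (P : Measure Ω)
    {𝒳 : Type*} [MeasurableSpace 𝒳]
    (n K : ℕ)
    (Z : Fin (2 * n + 1) → Ω → 𝒳 × Fin K)
    (hmeas : ∀ i, Measurable (Z i))
    (hexch : ∀ σ : Equiv.Perm (Fin (2 * n + 1)),
      Measure.map (fun ω i => Z (σ i) ω) P = Measure.map (fun ω i => Z i ω) P)
    (s : 𝒳 × Fin K → ℝ) (hs : Measurable s)
    (Dcal : Finset (Fin (2 * n + 1)))
    (hDcal : Dcal = Finset.univ.filter
      (fun i : Fin (2 * n + 1) => n ≤ (i : ℕ) ∧ (i : ℕ) < 2 * n))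
    (Iy : Fin K → Ω → Finset (Fin (2 * n + 1)))
    (hIy : ∀ y ω, Iy y ω = Dcal.filter (fun i => (Z i ω).2 = y))
    (p : Fin K → Ω → ℝ)
    (hp : ∀ y ω, p y ω =
      ((((Iy y ω).filter
          (fun i => s ((Z i ω).1, y) ≤ s ((Z (Fin.last (2 * n)) ω).1, y))).card : ℝ) + 1)
        / (((Iy y ω).card : ℝ) + 1))
    (α : ℝ) (hα : α ∈ Set.Ioo (0 : ℝ) 1)
    (y : Fin K) (I : Finset (Fin (2 * n + 1))) (hI : I ⊆ Dcal)
    (m : ℕ) (hm : I.card = m)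
    (hdist : ∀ᵐ ω ∂P, (Iy y ω = I ∧ (Z (Fin.last (2 * n)) ω).2 = y) →
      Set.InjOn (fun i => s ((Z i ω).1, y)) ↑(insert (Fin.last (2 * n)) I)) :
    P[|{ω | Iy y ω = I ∧ (Z (Fin.last (2 * n)) ω).2 = y}]
        {ω | α < p ((Z (Fin.last (2 * n)) ω).2) ω}
      ≤ ENNReal.ofReal (1 - α + 1 / (m + 1)) := by
  set last := Fin.last (2 * n)
  have hlast : last ∉ Dcal := by simp [hDcal, last]
  have hlastI : last ∉ I := fun h => hlast (hI h)
  set J := insert last I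
  have hJ : #J = m + 1 := by rw [card_insert_of_notMem hlastI, hm]
  set S := labelPattern (insert last Dcal) J fun x : 𝒳 × Fin K => x.2 = y
  have hE : {ω | Iy y ω = I ∧ (Z last ω).2 = y} = {ω | (fun i => Z i ω) ∈ S} := by
    ext ω
    simp only [Set.mem_ofPred_eq, hIy]
    exact filter_eq_and_iff_mem_labelPattern hI hlast
      (q := fun x : 𝒳 × Fin K => x.2 = y) _
  have hS : MeasurableSet S := measurableSet_labelPattern (measurable_snd.eq_const y) _ _
  have hSJ : ∀ j ∈ J, ∀ z, z ∘ Equiv.swap j last ∈ S ↔ z ∈ S := fun j hj =>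
    comp_perm_mem_labelPattern_iff
      (swap_apply_mem_iff (insert_subset_insert _ hI hj) (mem_insert_self _ _))
      (swap_apply_mem_iff hj (mem_insert_self _ _))
  have hA : {ω | Iy y ω = I ∧ (Z last ω).2 = y} ∩ {ω | α < p (Z last ω).2 ω} =
      {ω | (fun i => Z i ω) ∈ S ∧
        ⌊α * (m + 1 : ℕ)⌋₊ < rank (fun i => s ((Z i ω).1, y)) J last} := by
    ext ω
    rw [Set.mem_inter_iff, hE]
    refine and_congr_right fun hωS => ?_
    obtain ⟨hIyω, hyω⟩ : Iy y ω = I ∧ (Z last ω).2 = y := (Set.ext_iff.1 hE ω).2 hωS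
    rw [Set.mem_ofPred_eq, hyω, hp, hIyω, hm, rank_insert_self hlastI,
      ← lt_div_iff_floor_mul_lt hα.1.le m.succ_pos]
    push_cast
    rfl
  have key := card_mul_measure_lt_rank_le hmeas hexch (g := fun x => s (x.1, y))
    (hs.comp (measurable_fst.prodMk measurable_const)) hS (mem_insert_self last I) hSJ
    (hdist.mono fun ω h hωS => h ((Set.ext_iff.1 hE ω).2 hωS)) ⌊α * (m + 1 : ℕ)⌋₊
  rw [hJ] at key
  calc _ ≤ ((m + 1 - ⌊α * (m + 1 : ℕ)⌋₊ : ℕ) : ℝ≥0∞) / (m + 1 : ℕ) :=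
        cond_apply_le_div_of_mul_le (hE ▸ measurable_pi_lambda _ hmeas hS) (by positivity)
          (ENNReal.natCast_ne_top _) (by rwa [hA, hE])
    _ ≤ _ := by exact_mod_cast natCast_sub_floor_mul_div_le hα.2.le m.succ_pos

/-- Theorem 2, Algorithm 2, upper bound: conditionally on
`{I_y = I, Y_{2n+1} = y}` (with `|I| = m`, positive probability), if the scores
`{s(X_i, y) : i ∈ I} ∪ {s(X_{2n+1}, y)}` are a.s. pairwise distinct on this event, the
prediction set `C(X_{2n+1}) = {y : p(X_{2n+1}|y) > α}` satisfies
`P(Y_{2n+1} ∈ C(X_{2n+1}) | I_y = I, Y_{2n+1} = y) ≤ 1 − α + 1/(m+1)`. -/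
theorem conditional_prediction_set_coverage_upper_bound
    {Ω : Type*} [MeasurableSpace Ω] (P : Measure Ω) [IsProbabilityMeasure P]
    {𝒳 : Type*} [MeasurableSpace 𝒳]
    (n K : ℕ) (hn : 1 ≤ n) (hK : 1 ≤ K)
    (Z : Fin (2 * n + 1) → Ω → 𝒳 × Fin K)
    (hmeas : ∀ i, Measurable (Z i))
    (hexch : ∀ σ : Equiv.Perm (Fin (2 * n + 1)),
      Measure.map (fun ω i => Z (σ i) ω) P = Measure.map (fun ω i => Z i ω) P)
    (s : 𝒳 × Fin K → ℝ) (hs : Measurable s)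
    (Dcal : Finset (Fin (2 * n + 1)))
    (hDcal : Dcal = Finset.univ.filter
      (fun i : Fin (2 * n + 1) => n ≤ (i : ℕ) ∧ (i : ℕ) < 2 * n))
    (Iy : Fin K → Ω → Finset (Fin (2 * n + 1)))
    (hIy : ∀ y ω, Iy y ω = Dcal.filter (fun i => (Z i ω).2 = y))
    (p : Fin K → Ω → ℝ)
    (hp : ∀ y ω, p y ω =
      ((((Iy y ω).filter
          (fun i => s ((Z i ω).1, y) ≤ s ((Z (Fin.last (2 * n)) ω).1, y))).card : ℝ) + 1)
        / (((Iy y ω).card : ℝ) + 1))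
    (α : ℝ) (hα : α ∈ Set.Ioo (0 : ℝ) 1)
    (y : Fin K) (I : Finset (Fin (2 * n + 1))) (hI : I ⊆ Dcal)
    (m : ℕ) (hm : I.card = m)
    (hpos : 0 < P {ω | Iy y ω = I ∧ (Z (Fin.last (2 * n)) ω).2 = y})
    (hdist : ∀ᵐ ω ∂P, (Iy y ω = I ∧ (Z (Fin.last (2 * n)) ω).2 = y) →
      Set.InjOn (fun i => s ((Z i ω).1, y)) ↑(insert (Fin.last (2 * n)) I)) :
    P[|{ω | Iy y ω = I ∧ (Z (Fin.last (2 * n)) ω).2 = y}]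
        {ω | α < p ((Z (Fin.last (2 * n)) ω).2) ω}
      ≤ ENNReal.ofReal (1 - α + 1 / (m + 1)) :=
  conditional_prediction_set_coverage_upper_bound_general P n K Z hmeas hexch s hs Dcal hDcal Iy hIy
    p hp α hα y I hI m hm hdist
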